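/- arXiv:1610.08786 — 6 statements merged into one kernel-verified Lean document; each statement's English description precedes it below -/
import Mathlib

section
/- For 1 ≤ m ≤ n, the number of parking functions with m cars on the directed path with n spots is (n+1-m)(n+1)^{m-1}. -/
/-!
Pollak's circular argument. A sequence parks iff for every `t` at most `t` cars prefer one of
the spots `1, …, t`. Put `q = n + 1` and read preferences in `ZMod q`, where preference `0` never
parks. For each `b : Fin m → ZMod q` exactly `q - m` of the translates `b - c` park: repeating `b`
periodically along `ℕ` and letting `A t` be `t` minus the number of cars preferring a spot `< t`,
the shift `c = p` works iff `A p < A s` for all `s ∈ (p, p + q]`; as `A` rises by at most one per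
step and by `q - m` per period, there are `q - m` such `p` (the cycle lemma). Translations permute
the parking functions, so counting pairs `(b, c)` gives `q * #PF = q ^ m * (q - m)`.
-/

/-- Simulate the parking process on the directed path `…→3→2→1`: cars arrive in
order with preferred spots given by the list; a car with preference `s` parks at
the largest unoccupied spot in `{1,…,s}`, returning `none` if some car fails. -/
def parkPath : Finset ℕ → List ℕ → Option (Finset ℕ)
  | occ, [] => some occ
  | occ, s :: rest =>
    let avail := (Finset.Icc 1 s).filter (fun k => k ∉ occ)
    if h : avail.Nonempty then parkPath (insert (avail.max' h) occ) rest
    else none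

/-- `(s₁,…,s_m)` is a parking function iff every car succeeds in parking. -/
def IsParkingSeq (l : List ℕ) : Bool := (parkPath ∅ l).isSome

open Finset

def IsParkingFun {ι : Type*} [Fintype ι] (f : ι → ℕ) : Prop := ∀ t, #{i | f i ≤ t} ≤ t

lemma IsParkingFun.one_le {ι : Type*} [Fintype ι] {f : ι → ℕ} (h : IsParkingFun f) (i : ι) :
    1 ≤ f i := by
  by_contra hi
  have hpos : 0 < #{j | f j ≤ 0} :=
    card_pos.2 ⟨i, by simp only [mem_filter, mem_univ, true_and]; omega⟩
  exact hpos.not_ge (h 0)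

lemma card_filter_Icc_notMem_insert {occ : Finset ℕ} {p : ℕ} (hp : p ∉ occ) (hp₁ : 1 ≤ p)
    (t : ℕ) :
    #{k ∈ Icc 1 t | k ∉ insert p occ} + (if p ≤ t then 1 else 0) = #{k ∈ Icc 1 t | k ∉ occ} := by
  have herase : {k ∈ Icc 1 t | k ∉ insert p occ} = {k ∈ Icc 1 t | k ∉ occ}.erase p := by
    ext k
    simp only [mem_filter, mem_insert, mem_erase]
    tauto
  split_ifs with hpt
  · rw [herase, card_erase_add_one (by simp [hp, hp₁, hpt])]
  · rw [herase, erase_eq_of_notMem (by simp [hpt]), add_zero]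

lemma filter_Icc_eq_of_forall_le {P : ℕ → Prop} [DecidablePred P] {s t : ℕ} (hts : t ≤ s)
    (h : ∀ k ∈ {k ∈ Icc 1 s | P k}, k ≤ t) : {k ∈ Icc 1 t | P k} = {k ∈ Icc 1 s | P k} := by
  refine Subset.antisymm (filter_subset_filter _ (Icc_subset_Icc_right hts)) fun k hk => ?_
  have hkt := h k hk
  simp only [mem_filter, mem_Icc] at hk ⊢
  exact ⟨⟨hk.1.1, hkt⟩, hk.2⟩

theorem parkPath_isSome_iff (l : List ℕ) (occ : Finset ℕ) :
    (parkPath occ l).isSome ↔ ∀ t, l.countP (· ≤ t) ≤ #{k ∈ Icc 1 t | k ∉ occ} := by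
  induction l generalizing occ with
  | nil => simp [parkPath]
  | cons s l ih =>
    simp only [List.countP_cons, decide_eq_true_eq]
    by_cases h : ({k ∈ Icc 1 s | k ∉ occ}).Nonempty
    · simp only [parkPath, dif_pos h, ih]
      generalize hp : max' _ h = p
      obtain ⟨⟨hp₁, hps⟩, hpocc⟩ : (1 ≤ p ∧ p ≤ s) ∧ p ∉ occ := by
        simpa [← hp] using max'_mem _ h
      have hcard := card_filter_Icc_notMem_insert hpocc hp₁
      refine ⟨fun H t => ?_, fun H t => ?_⟩
      · have := H t
        have := hcard t
        split_ifs at * <;> omega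
      · have ht := H t
        have hct := hcard t
        by_cases hpt : p ≤ t
        · rw [if_pos hpt] at hct
          by_cases hst : s ≤ t
          · rw [if_pos hst] at ht
            omega
          · have hfree := filter_Icc_eq_of_forall_le (P := (· ∉ occ)) (le_of_not_ge hst)
              fun k hk => ((le_max' _ k hk).trans_eq hp).trans hpt
            have hs := H s
            rw [if_pos le_rfl] at hs
            have hmono : l.countP (· ≤ t) ≤ l.countP (· ≤ s) :=
              List.countP_mono_left fun x _ hx => by simp only [decide_eq_true_eq] at hx ⊢; omega
            rw [hfree] at hct
            omega
        · rw [if_neg hpt] at hct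
          rw [if_neg fun hst => hpt (hps.trans hst)] at ht
          omega
    · have hfull : #{k ∈ Icc 1 s | k ∉ occ} = 0 := card_eq_zero.2 (not_nonempty_iff_eq_empty.1 h)
      simp only [parkPath, dif_neg h, Option.isSome_none, Bool.false_eq_true, false_iff, not_forall]
      exact ⟨s, by simp [hfull]⟩

lemma countP_ofFn {m : ℕ} (f : Fin m → ℕ) (p : ℕ → Prop) [DecidablePred p] :
    (List.ofFn f).countP (fun x => decide (p x)) = #{i | p (f i)} := by
  rw [← Multiset.coe_countP, ← Fin.univ_val_map, Multiset.countP_map]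
  rfl

theorem isParkingSeq_ofFn_iff {m : ℕ} (f : Fin m → ℕ) :
    IsParkingSeq (List.ofFn f) ↔ IsParkingFun f := by
  simp [IsParkingSeq, IsParkingFun, parkPath_isSome_iff, countP_ofFn]

section CycleLemma

def windowMin (A : ℕ → ℤ) (k p : ℕ) : ℤ :=
  (range (k + 1)).inf' nonempty_range_add_one fun u => A (p + u)

variable {A : ℕ → ℤ} {k : ℕ}

lemma windowMin_le {u : ℕ} (hu : u ≤ k) (p : ℕ) : windowMin A k p ≤ A (p + u) :=
  inf'_le _ (mem_range_succ_iff.2 hu)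

lemma exists_windowMin_eq (p : ℕ) : ∃ u ≤ k, windowMin A k p = A (p + u) := by
  obtain ⟨u, hu, h⟩ := exists_mem_eq_inf' nonempty_range_add_one fun u => A (p + u)
  exact ⟨u, mem_range_succ_iff.1 hu, h⟩

lemma lt_windowMin_iff {a : ℤ} {p : ℕ} : a < windowMin A k p ↔ ∀ u ≤ k, a < A (p + u) := by
  simp [windowMin, lt_inf'_iff]

lemma windowMin_le_self (p : ℕ) : windowMin A k p ≤ A p := by
  simpa using windowMin_le (A := A) (Nat.zero_le k) p

lemma windowMin_eq_or_succ_le (p : ℕ) :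
    windowMin A k p = A p ∨ windowMin A k (p + 1) ≤ windowMin A k p := by
  obtain ⟨u, hu, he⟩ := exists_windowMin_eq (A := A) (k := k) p
  rcases u with _ | u
  · exact .inl he
  · have := windowMin_le (A := A) (show u ≤ k by omega) (p + 1)
    rw [← add_assoc] at he
    rw [add_right_comm, ← he] at this
    exact .inr this

lemma windowMin_succ_le (hstep : ∀ t, A (t + 1) ≤ A t + 1) (p : ℕ) :
    windowMin A k (p + 1) ≤ windowMin A k p + 1 := by
  have := windowMin_le_self (A := A) (k := k) (p + 1)
  have := hstep p
  rcases windowMin_eq_or_succ_le (A := A) (k := k) p with h | h <;> omega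

variable {d : ℕ}

section Periodic

variable (hper : ∀ t, A (t + (k + 1)) = A t + d)
include hper

lemma windowMin_le_succ (p : ℕ) : windowMin A k p ≤ windowMin A k (p + 1) := by
  obtain ⟨u, hu, he⟩ := exists_windowMin_eq (A := A) (k := k) (p + 1)
  rw [he]
  rcases hu.lt_or_eq with hu | rfl
  · rw [add_right_comm]
    exact windowMin_le hu _
  · rw [add_assoc, add_comm 1, hper]
    have := windowMin_le_self (A := A) (k := u) p
    omega

lemma windowMin_add_period (p : ℕ) : windowMin A k (p + (k + 1)) = windowMin A k p + d := by
  obtain ⟨u, hu, he⟩ := exists_windowMin_eq (A := A) (k := k) p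
  obtain ⟨v, hv, he'⟩ := exists_windowMin_eq (A := A) (k := k) (p + (k + 1))
  have h₁ := windowMin_le (A := A) hu (p + (k + 1))
  have h₂ := windowMin_le (A := A) hv p
  rw [add_right_comm, hper] at h₁ he'
  omega

lemma windowMin_succ_sub (hstep : ∀ t, A (t + 1) ≤ A t + 1) (p : ℕ) :
    windowMin A k (p + 1) - windowMin A k p = if A p < windowMin A k (p + 1) then 1 else 0 := by
  have := windowMin_succ_le (k := k) hstep p
  have := windowMin_le_succ hper p
  have := windowMin_le_self (A := A) (k := k) p
  rcases windowMin_eq_or_succ_le (A := A) (k := k) p with h | h <;> split_ifs <;> omega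

end Periodic

theorem cycle_lemma {q : ℕ} (hstep : ∀ t, A (t + 1) ≤ A t + 1)
    (hper : ∀ t, A (t + q) = A t + d) :
    #{p ∈ range q | ∀ u < q, A p < A (p + 1 + u)} = d := by
  rcases q with _ | k
  · simpa [eq_comm] using hper 0
  -- The good `p` are the steps where the window minimum goes up (by one); over a period it goes
  -- up by `d`.
  have hgood : ∀ p, (∀ u < k + 1, A p < A (p + 1 + u)) ↔ A p < windowMin A k (p + 1) := by
    simp [lt_windowMin_iff]
  zify
  calc (#{p ∈ range (k + 1) | ∀ u < k + 1, A p < A (p + 1 + u)} : ℤ)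
      = ∑ p ∈ range (k + 1), if A p < windowMin A k (p + 1) then 1 else 0 := by
        simp_rw [card_filter, hgood]
        push_cast
        rfl
    _ = ∑ p ∈ range (k + 1), (windowMin A k (p + 1) - windowMin A k p) := by
        simp_rw [windowMin_succ_sub hper hstep]
    _ = d := by
        rw [sum_range_sub, ← zero_add (k + 1), windowMin_add_period hper]
        ring

end CycleLemma

section Residues

variable {q : ℕ} [NeZero q] {ι : Type*} [Fintype ι]

lemma card_filter_univ_eq_card_filter_range (P : ZMod q → Prop) [DecidablePred P] :
    #{c : ZMod q | P c} = #{p ∈ range q | P ((p : ℕ) : ZMod q)} :=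
  card_nbij' ZMod.val Nat.cast
    (fun c hc => by simp_all [ZMod.val_lt])
    (fun p hp => by simp_all)
    (fun c _ => ZMod.natCast_zmod_val c)
    (fun p hp => ZMod.val_cast_of_lt (mem_range.1 (mem_filter.1 hp).1))

lemma card_filter_Ico_natCast_eq (x : ZMod q) (p : ℕ) {k : ℕ} (hk : k ≤ q) :
    #{u ∈ Ico p (p + k) | ((u : ℕ) : ZMod q) = x} = if (x - p).val < k then 1 else 0 := by
  have hfilter : {u ∈ Ico p (p + k) | ((u : ℕ) : ZMod q) = x} =
      if (x - p).val < k then {p + (x - p).val} else ∅ := by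
    ext u
    simp only [mem_filter, mem_Ico]
    constructor
    · rintro ⟨⟨hpu, hu⟩, rfl⟩
      have hval : ((u : ZMod q) - p).val = u - p := by
        rw [← Nat.cast_sub hpu, ZMod.val_cast_of_lt (by omega)]
      rw [hval, if_pos (by omega), mem_singleton]
      omega
    · split_ifs with h
      · rw [mem_singleton]
        rintro rfl
        refine ⟨by omega, ?_⟩
        push_cast
        rw [ZMod.natCast_zmod_val]
        ring
      · simp
  rw [hfilter]
  split_ifs <;> simp

/-- The number of cars with preference `< t` when `b` is repeated with period `q` along `ℕ`. -/
def residueCount (b : ι → ZMod q) (t : ℕ) : ℕ :=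
  ∑ i, #{u ∈ range t | ((u : ℕ) : ZMod q) = b i}

lemma residueCount_add (b : ι → ZMod q) (p : ℕ) {k : ℕ} (hk : k ≤ q) :
    residueCount b (p + k) = residueCount b p + #{i | (b i - p).val < k} := by
  rw [residueCount, residueCount, card_filter, ← sum_add_distrib]
  refine sum_congr rfl fun i _ => ?_
  rw [← card_filter_Ico_natCast_eq _ p hk]
  simp only [card_filter, sum_range_add_sum_Ico _ (Nat.le_add_right p k)]

open scoped Classical in
theorem card_filter_isParkingFun_sub (b : ι → ZMod q) (hι : Fintype.card ι ≤ q) :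
    #{c : ZMod q | IsParkingFun fun i => (b i - c).val} = q - Fintype.card ι := by
  set A : ℕ → ℤ := fun t => t - residueCount b t with hA
  have hstep : ∀ t, A (t + 1) ≤ A t + 1 := fun t => by
    have := residueCount_add b t NeZero.one_le
    simp only [hA]
    push_cast
    omega
  have hper : ∀ t, A (t + q) = A t + (q - Fintype.card ι : ℕ) := fun t => by
    have := residueCount_add b t le_rfl
    simp only [ZMod.val_lt, filter_true, card_univ] at this
    simp only [hA, this]
    push_cast [Nat.cast_sub hι]
    ring
  have hgood : ∀ p : ℕ, IsParkingFun (fun i => (b i - p).val) ↔ ∀ u < q, A p < A (p + 1 + u) := by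
    intro p
    have key : ∀ u < q, A p < A (p + 1 + u) ↔ #{i | (b i - p).val ≤ u} ≤ u := fun u hu => by
      have := residueCount_add b p (k := u + 1) hu
      simp only [Nat.lt_succ_iff] at this
      simp only [hA, add_assoc, add_comm 1 u, this]
      push_cast
      omega
    refine ⟨fun h u hu => (key u hu).2 (h u), fun h t => ?_⟩
    by_cases ht : t < q
    · exact (key t ht).1 (h t ht)
    · exact (card_le_univ _).trans (by omega)
  rw [card_filter_univ_eq_card_filter_range, filter_congr fun p _ => hgood p]
  exact cycle_lemma hstep hper

open scoped Classical in
theorem mul_card_filter_isParkingFun_val [DecidableEq ι] (hι : Fintype.card ι ≤ q) :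
    q * #{b : ι → ZMod q | IsParkingFun fun i => (b i).val} =
      q ^ Fintype.card ι * (q - Fintype.card ι) := by
  have htranslate : ∀ c : ZMod q, #{b : ι → ZMod q | IsParkingFun fun i => (b i - c).val} =
      #{b : ι → ZMod q | IsParkingFun fun i => (b i).val} := fun c =>
    card_equiv (Equiv.subRight fun _ => c) fun b => by simp
  calc q * #{b : ι → ZMod q | IsParkingFun fun i => (b i).val}
      = ∑ c : ZMod q, #{b : ι → ZMod q | IsParkingFun fun i => (b i - c).val} := by
        simp [htranslate, ZMod.card]
    _ = ∑ b : ι → ZMod q, #{c : ZMod q | IsParkingFun fun i => (b i - c).val} := by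
        simp only [card_filter]
        exact sum_comm
    _ = q ^ Fintype.card ι * (q - Fintype.card ι) := by
        simp [card_filter_isParkingFun_sub _ hι, ZMod.card]

end Residues

open scoped Classical in
lemma card_filter_isParkingFun_succ {ι : Type*} [Fintype ι] [DecidableEq ι] (n : ℕ) :
    #{s : ι → Fin n | IsParkingFun fun i => (s i : ℕ) + 1} =
      #{b : ι → ZMod (n + 1) | IsParkingFun fun i => (b i).val} := by
  have hval : ∀ k : Fin n, (((k : ℕ) : ZMod (n + 1)) + 1).val = k + 1 := fun k => by
    rw [← Nat.cast_add_one, ZMod.val_cast_of_lt (by omega)]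
  refine card_bij (fun s _ i => ((s i : ℕ) : ZMod (n + 1)) + 1)
    (fun s hs => by simpa [hval] using hs) (fun s₁ _ s₂ _ h => funext fun i => Fin.ext ?_)
    (fun b hb => ?_)
  · have := congrArg ZMod.val (congrFun h i)
    simp only [hval] at this
    omega
  have hb := (mem_filter.1 hb).2
  have hpos := hb.one_le
  refine ⟨fun i => ⟨(b i).val - 1, by have := ZMod.val_lt (b i); have := hpos i; omega⟩, ?_, ?_⟩
  · simpa [Nat.sub_add_cancel (hpos _)] using hb
  · funext i
    rw [← Nat.cast_add_one, Nat.sub_add_cancel (hpos i), ZMod.natCast_zmod_val]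

/-- For `1 ≤ m ≤ n`, the number of parking functions with `m` cars on the
directed path with `n` spots is `(n+1-m)(n+1)^{m-1}`. -/
theorem count_parking_functions_path (n m : ℕ) (hm : 1 ≤ m) (hmn : m ≤ n) :
    (Finset.univ.filter
        (fun s : Fin m → Fin n =>
          IsParkingSeq (List.ofFn (fun i => (s i : ℕ) + 1)))).card
      = (n + 1 - m) * (n + 1) ^ (m - 1) := by
  obtain ⟨k, rfl⟩ : ∃ k, m = k + 1 := ⟨m - 1, by omega⟩
  classical
  have hcount := mul_card_filter_isParkingFun_val (ι := Fin (k + 1)) (q := n + 1)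
    (by rw [Fintype.card_fin]; omega)
  rw [Fintype.card_fin, ← card_filter_isParkingFun_succ] at hcount
  rw [filter_congr fun s _ => isParkingSeq_ofFn_iff _]
  refine Nat.eq_of_mul_eq_mul_left (n := n + 1) (by omega) ?_
  rw [hcount, Nat.add_sub_cancel, pow_succ]
  ring
end

section
/- If each of m = ⌊αn⌋ cars independently chooses a uniformly random preferred spot on the path of n spots, with 0 < α < 1, then the probability that the resulting sequence is a parking function, namely (n+1-m)(n+1)^{m-1}/n^m, converges to (1-α)e^α as n → ∞. -/
open Filter Real Topology

/-!
For `m ≥ 1`, which holds for large `n`, the probability factors as `(1 - m/(n+1)) * (1 + 1/n)^m`. Since `m/n → α`, the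
first factor tends to `1 - α`, and the second equals `exp ((m/n) · n log(1 + 1/n))`, which tends
to `exp α` because `n log(1 + 1/n) → 1`.
-/

lemma tendsto_one_add_div_pow_of_tendsto_div {k : ℕ → ℕ} {a : ℝ}
    (hk : Tendsto (fun n ↦ (k n : ℝ) / n) atTop (𝓝 a)) (t : ℝ) :
    Tendsto (fun n : ℕ ↦ (1 + t / n) ^ k n) atTop (𝓝 (exp (a * t))) := by
  have hlog : Tendsto (fun n : ℕ ↦ (n : ℝ) * log (1 + t / n)) atTop (𝓝 t) :=
    (tendsto_mul_log_one_add_div_atTop t).comp tendsto_natCast_atTop_atTop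
  have hbase : Tendsto (fun n : ℕ ↦ 1 + t / n) atTop (𝓝 1) := by
    simpa using tendsto_const_nhds.add (tendsto_const_div_atTop_nhds_zero_nat t)
  refine ((hk.mul hlog).rexp).congr' ?_
  filter_upwards [hbase.eventually (lt_mem_nhds one_pos), eventually_ne_atTop 0]
    with n hpos hn
  rw [← mul_assoc, div_mul_cancel₀ _ (Nat.cast_ne_zero.mpr hn), exp_nat_mul, exp_log hpos]

lemma eventually_one_le_nat_floor_mul {α : ℝ} (hα : 0 < α) :
    ∀ᶠ n : ℕ in atTop, 1 ≤ ⌊α * n⌋₊ :=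
  (tendsto_nat_floor_atTop.comp
    (tendsto_natCast_atTop_atTop.const_mul_atTop hα)).eventually_ge_atTop 1

lemma add_one_sub_mul_pow_pred_div_pow {x : ℝ} (hx : x ≠ 0) (hx1 : x + 1 ≠ 0) {m : ℕ}
    (hm : 1 ≤ m) :
    (x + 1 - m) * (x + 1) ^ (m - 1) / x ^ m = (1 - m / (x + 1)) * (1 + 1 / x) ^ m := by
  obtain ⟨k, rfl⟩ := Nat.exists_eq_add_of_le' hm
  rw [Nat.add_sub_cancel, show 1 + 1 / x = (x + 1) / x by field_simp, div_pow]
  field_simp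
  ring

theorem parking_probability_path_limit_general (α : ℝ) (hα0 : 0 < α) :
    Tendsto
      (fun n : ℕ =>
        ((n : ℝ) + 1 - (⌊α * n⌋₊ : ℕ)) * ((n : ℝ) + 1) ^ (⌊α * (n : ℝ)⌋₊ - 1)
          / (n : ℝ) ^ (⌊α * (n : ℝ)⌋₊))
      atTop (nhds ((1 - α) * Real.exp α)) := by
  have hm : Tendsto (fun n : ℕ ↦ (⌊α * n⌋₊ : ℝ) / n) atTop (𝓝 α) :=
    (tendsto_nat_floor_mul_div_atTop hα0.le).comp tendsto_natCast_atTop_atTop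
  have hfirst : Tendsto (fun n : ℕ ↦ 1 - (⌊α * n⌋₊ : ℝ) / (n + 1)) atTop (𝓝 (1 - α)) := by
    refine tendsto_const_nhds.sub ?_
    simpa using (hm.mul (tendsto_natCast_div_add_atTop (1 : ℝ))).congr' <|
      (eventually_ne_atTop 0).mono fun n hn ↦ by field_simp
  have hsecond := tendsto_one_add_div_pow_of_tendsto_div hm 1
  rw [mul_one] at hsecond
  refine (hfirst.mul hsecond).congr' ?_
  filter_upwards [eventually_one_le_nat_floor_mul hα0, eventually_gt_atTop 0] with n hm1 hn
  exact (add_one_sub_mul_pow_pred_div_pow (by positivity) (by positivity) hm1).symm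

/-- With `m = ⌊αn⌋` cars choosing uniform independent spots on the path with `n`
spots, the probability of obtaining a parking function, namely
`(n+1-m)(n+1)^{m-1}/n^m`, converges to `(1-α)e^α` as `n → ∞`. -/
theorem parking_probability_path_limit (α : ℝ) (hα0 : 0 < α) (hα1 : α < 1) :
    Tendsto
      (fun n : ℕ =>
        ((n : ℝ) + 1 - (⌊α * n⌋₊ : ℕ)) * ((n : ℝ) + 1) ^ (⌊α * (n : ℝ)⌋₊ - 1)
          / (n : ℝ) ^ (⌊α * (n : ℝ)⌋₊))
      atTop (nhds ((1 - α) * Real.exp α)) :=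
  parking_probability_path_limit_general α hα0
end

section
/- Let (ξ_k)_{k≥1} be i.i.d. integer-valued random variables with ξ_k ≤ 1 almost surely, E[ξ_1] > 0, and let C_n = ξ_1 + ... + ξ_n. Then P(C_n ≥ 0 for all n ≥ 1) = E[ξ_1] / P(ξ_1 = 1). -/
/-!
Call `n` a ladder epoch of the walk if `C n > C k` for every `k < n`. Since the walk climbs by
at most one per step, its running maximum `max_{k ≤ N} C k` counts the ladder epochs in
`1, …, N`. Reversing the first `n` increments preserves their joint law and turns "`n` is a
ladder epoch" into "`C 1, …, C n > 0`", so
`E[max_{k ≤ N} C k] = ∑_{n=1}^N P(C 1, …, C n > 0)`.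
By the strong law `max_{k ≤ N} C k / N → E ξ` a.s., and `0 ≤ max_{k ≤ N} C k ≤ N`, so dominated
convergence and Cesàro averaging give `P(C n > 0 for all n ≥ 1) = E ξ`. Staying positive forever
means `ξ₁ = 1` and the walk restarted after the first step stays nonnegative; independence of
the first step gives `E ξ = P(ξ₁ = 1) · P(C n ≥ 0 for all n ≥ 1)`.
-/

open MeasureTheory ProbabilityTheory Filter Finset Topology

lemma tendsto_partialSups_div_of_tendsto_div {v : ℕ → ℝ} {L : ℝ} (hL : 0 ≤ L)
    (hv : Tendsto (fun n => v n / n) atTop (𝓝 L)) :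
    Tendsto (fun n => partialSups v n / n) atTop (𝓝 L) := by
  refine tendsto_order.2 ⟨fun b hb => ?_, fun b hb => ?_⟩
  · filter_upwards [(tendsto_order.1 hv).1 b hb] with n hn
    exact hn.trans_le (div_le_div_of_nonneg_right (le_partialSups v n) n.cast_nonneg)
  · obtain ⟨c, hLc, hcb⟩ := exists_between hb
    obtain ⟨K, hK⟩ := eventually_atTop.1 ((tendsto_order.1 hv).2 c hLc)
    have hsmall := (tendsto_order.1
      (tendsto_const_div_atTop_nhds_zero_nat (partialSups v K))).2 b (hL.trans_lt hb)
    filter_upwards [hsmall, eventually_gt_atTop 0] with n hKn hn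
    have hn : (0 : ℝ) < n := by exact_mod_cast hn
    have hsup : partialSups v n ≤ max (partialSups v K) (c * n) := by
      refine partialSups_le _ _ _ fun j hj => ?_
      rcases le_or_gt j K with hjK | hKj
      · exact le_max_of_le_left (le_partialSups_of_le v hjK)
      · have hj0 : (0 : ℝ) < j := by exact_mod_cast K.zero_le.trans_lt hKj
        have hvj := (div_lt_iff₀ hj0).1 (hK j hKj.le)
        have hjn : (j : ℝ) ≤ n := by exact_mod_cast hj
        exact le_max_of_le_right (hvj.le.trans (by gcongr; linarith))
    rw [div_lt_iff₀ hn]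
    exact hsup.trans_lt (max_lt ((div_lt_iff₀ hn).1 hKn) (by gcongr))

namespace SkipFreeWalk

def partialSum (x : ℕ → ℤ) (n : ℕ) : ℤ := ∑ i ∈ range n, x i

def ladderEpoch (n : ℕ) : Set (ℕ → ℤ) := {x | ∀ k < n, partialSum x k < partialSum x n}

def positiveUpTo (n : ℕ) : Set (ℕ → ℤ) := {x | ∀ m, 1 ≤ m → m ≤ n → 0 < partialSum x m}

def positiveForever : Set (ℕ → ℤ) := {x | ∀ m, 1 ≤ m → 0 < partialSum x m}

def nonnegForever : Set (ℕ → ℤ) := {x | ∀ m, 1 ≤ m → 0 ≤ partialSum x m}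

def reflectBelow (n i : ℕ) : ℕ := if i < n then n - 1 - i else i

@[simp] lemma partialSum_zero (x : ℕ → ℤ) : partialSum x 0 = 0 := rfl

lemma partialSum_succ (x : ℕ → ℤ) (n : ℕ) : partialSum x (n + 1) = partialSum x n + x n :=
  sum_range_succ x n

lemma partialSum_succ' (x : ℕ → ℤ) (n : ℕ) :
    partialSum x (n + 1) = partialSum (fun i => x (i + 1)) n + x 0 :=
  sum_range_succ' x n

lemma reflectBelow_injective (n : ℕ) : Function.Injective (reflectBelow n) := by
  intro i j h
  simp only [reflectBelow] at h
  split_ifs at h <;> omega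

lemma partialSum_comp_reflectBelow (x : ℕ → ℤ) {m n : ℕ} (hmn : m ≤ n) :
    partialSum (x ∘ reflectBelow n) m = partialSum x n - partialSum x (n - m) := by
  induction m with
  | zero => simp
  | succ m ih =>
    obtain ⟨k, hk⟩ : ∃ k, n - m = k + 1 := ⟨n - m - 1, by omega⟩
    have hrefl : reflectBelow n m = k := by simp only [reflectBelow]; split_ifs <;> omega
    rw [partialSum_succ, ih (by omega), hk, partialSum_succ, Function.comp_apply, hrefl,
      show n - (m + 1) = k by omega]
    ring

lemma comp_reflectBelow_mem_positiveUpTo_iff {x : ℕ → ℤ} {n : ℕ} :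
    x ∘ reflectBelow n ∈ positiveUpTo n ↔ x ∈ ladderEpoch n := by
  simp only [positiveUpTo, ladderEpoch, Set.mem_ofPred_eq]
  constructor
  · intro h k hk
    have := h (n - k) (by omega) (by omega)
    rwa [partialSum_comp_reflectBelow x (by omega), Nat.sub_sub_self hk.le, sub_pos] at this
  · intro h m hm hmn
    rw [partialSum_comp_reflectBelow x hmn, sub_pos]
    exact h (n - m) (by omega)

lemma mem_ladderEpoch_succ_iff {x : ℕ → ℤ} {N : ℕ} :
    x ∈ ladderEpoch (N + 1) ↔ partialSups (partialSum x) N < partialSum x (N + 1) := by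
  simp only [ladderEpoch, Set.mem_ofPred_eq, Nat.lt_succ_iff]
  exact (partialSups_iff_forall (· < partialSum x (N + 1)) max_lt_iff).symm

open Classical in
lemma partialSups_partialSum_eq_count_ladderEpoch {x : ℕ → ℤ} (hx : ∀ i, x i ≤ 1) (N : ℕ) :
    partialSups (partialSum x) N = ∑ n ∈ range N, if x ∈ ladderEpoch (n + 1) then 1 else 0 := by
  induction N with
  | zero => simp
  | succ N ih =>
    rw [← Order.succ_eq_add_one, partialSups_succ, Order.succ_eq_add_one, sum_range_succ, ← ih]
    have hstep : partialSum x (N + 1) ≤ partialSups (partialSum x) N + 1 := by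
      rw [partialSum_succ]
      linarith [hx N, le_partialSups (partialSum x) N]
    split_ifs with h <;> rw [mem_ladderEpoch_succ_iff] at h <;> omega

lemma partialSups_partialSum_nonneg (x : ℕ → ℤ) (N : ℕ) : 0 ≤ partialSups (partialSum x) N :=
  le_partialSups_of_le (partialSum x) N.zero_le

lemma partialSups_partialSum_le {x : ℕ → ℤ} (hx : ∀ i, x i ≤ 1) (N : ℕ) :
    partialSups (partialSum x) N ≤ N := by
  refine partialSups_le _ _ _ fun k hk => ?_
  calc partialSum x k ≤ ∑ _i ∈ range k, (1 : ℤ) := sum_le_sum fun i _ => hx i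
    _ ≤ N := by simpa using hk

lemma iInter_positiveUpTo_succ : ⋂ n, positiveUpTo (n + 1) = positiveForever := by
  ext x
  simp only [Set.mem_iInter, positiveUpTo, positiveForever, Set.mem_ofPred_eq]
  exact ⟨fun h m hm => h (m - 1) m hm (by omega), fun h _ m hm _ => h m hm⟩

lemma positiveUpTo_antitone : Antitone positiveUpTo :=
  fun _ _ hnk _ hx m hm hmk => hx m hm (hmk.trans hnk)

lemma mem_positiveForever_iff {x : ℕ → ℤ} (h0 : x 0 ≤ 1) :
    x ∈ positiveForever ↔ x 0 = 1 ∧ (fun i => x (i + 1)) ∈ nonnegForever := by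
  simp only [positiveForever, nonnegForever, Set.mem_ofPred_eq]
  constructor
  · intro h
    have hx0 : x 0 = 1 := by
      have := h 1 le_rfl
      simp only [partialSum, sum_range_one] at this
      omega
    refine ⟨hx0, fun m _ => ?_⟩
    have := h (m + 1) (by omega)
    rw [partialSum_succ'] at this
    omega
  · rintro ⟨hx0, h⟩ (_ | m) hm
    · omega
    rw [partialSum_succ', hx0]
    rcases m.eq_zero_or_pos with rfl | hm
    · simp
    · linarith [h m hm]

lemma measurable_partialSum (n : ℕ) : Measurable fun x : ℕ → ℤ => partialSum x n := by
  unfold partialSum; fun_prop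

lemma measurable_partialSups_partialSum (N : ℕ) :
    Measurable fun x : ℕ → ℤ => partialSups (partialSum x) N := by
  simpa only [partialSups_eq_sup'_range] using
    Finset.measurable_range_sup'' fun k _ => measurable_partialSum k

lemma measurableSet_ladderEpoch (n : ℕ) : MeasurableSet (ladderEpoch n) := by
  simp only [ladderEpoch, Set.ofPred_forall]
  exact .iInter fun k => .iInter fun _ =>
    measurableSet_lt (measurable_partialSum k) (measurable_partialSum n)

lemma measurableSet_positiveUpTo (n : ℕ) : MeasurableSet (positiveUpTo n) := by
  simp only [positiveUpTo, Set.ofPred_forall]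
  exact .iInter fun m => .iInter fun _ => .iInter fun _ =>
    measurableSet_lt measurable_const (measurable_partialSum m)

lemma measurableSet_nonnegForever : MeasurableSet nonnegForever := by
  simp only [nonnegForever, Set.ofPred_forall]
  exact .iInter fun m => .iInter fun _ =>
    measurableSet_le measurable_const (measurable_partialSum m)

end SkipFreeWalk

namespace ProbabilityTheory

variable {Ω β ι : Type*} [MeasurableSpace Ω] {μ : Measure Ω} [MeasurableSpace β]

lemma iIndepFun.identDistrib_precomp {X : ι → Ω → β} (hX : ∀ i, Measurable (X i))
    (h : iIndepFun X μ) {g : ι → ι} (hg : g.Injective)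
    (hident : ∀ i, IdentDistrib (X (g i)) (X i) μ μ) :
    IdentDistrib (fun ω i => X (g i) ω) (fun ω i => X i ω) μ μ where
  aemeasurable_fst := (measurable_pi_lambda _ fun i => hX (g i)).aemeasurable
  aemeasurable_snd := (measurable_pi_lambda _ hX).aemeasurable
  map_eq := by
    rw [(h.precomp hg).map_fun_eq_infinitePi_map fun i => hX (g i),
      h.map_fun_eq_infinitePi_map hX]
    congr with i : 1
    exact (hident i).map_eq

lemma iIndepFun.indepFun_zero_succ {X : ℕ → Ω → β} (hX : ∀ i, Measurable (X i))
    (h : iIndepFun X μ) : IndepFun (X 0) (fun ω i => X (i + 1) ω) μ := by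
  have hsplit := indep_iSup_of_disjoint (fun i => (hX i).comap_le) h.iIndep
    (disjoint_compl_right (a := ({0} : Set ℕ)))
  refine indep_of_indep_of_le_right (indep_of_indep_of_le_left hsplit ?_) ?_
  · exact le_iSup₂ (f := fun i (_ : i ∈ ({0} : Set ℕ)) => MeasurableSpace.comap (X i) _) 0 rfl
  · simp only [MeasurableSpace.pi, MeasurableSpace.comap_iSup, MeasurableSpace.comap_comp]
    exact iSup_le fun i => le_iSup₂
      (f := fun j (_ : j ∈ ({0}ᶜ : Set ℕ)) => MeasurableSpace.comap (X j) _) (i + 1) (by simp)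

end ProbabilityTheory

namespace SkipFreeWalk

variable {Ω : Type*} [MeasurableSpace Ω] {μ : Measure Ω} {ξ : ℕ → Ω → ℤ}

lemma measure_ladderEpoch_eq (hmeas : ∀ i, Measurable (ξ i)) (hindep : iIndepFun ξ μ)
    (hident : ∀ i, IdentDistrib (ξ i) (ξ 0) μ μ) (n : ℕ) :
    μ ((fun ω i => ξ i ω) ⁻¹' ladderEpoch n) = μ ((fun ω i => ξ i ω) ⁻¹' positiveUpTo n) := by
  have hreflect := hindep.identDistrib_precomp hmeas (reflectBelow_injective n)
    fun i => (hident _).trans (hident i).symm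
  rw [← hreflect.measure_mem_eq (measurableSet_positiveUpTo n)]
  congr 1
  ext ω
  exact comp_reflectBelow_mem_positiveUpTo_iff.symm

lemma integral_partialSups_partialSum [IsFiniteMeasure μ] (hmeas : ∀ i, Measurable (ξ i))
    (hindep : iIndepFun ξ μ) (hident : ∀ i, IdentDistrib (ξ i) (ξ 0) μ μ)
    (hbound : ∀ᵐ ω ∂μ, ∀ i, ξ i ω ≤ 1) (N : ℕ) :
    ∫ ω, (partialSups (partialSum fun i => ξ i ω) N : ℝ) ∂μ
      = ∑ n ∈ range N, μ.real ((fun ω i => ξ i ω) ⁻¹' positiveUpTo (n + 1)) := by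
  have hladder n : MeasurableSet ((fun ω i => ξ i ω) ⁻¹' ladderEpoch n) :=
    measurableSet_preimage (by fun_prop) (measurableSet_ladderEpoch n)
  have hcount : (fun ω => (partialSups (partialSum fun i => ξ i ω) N : ℝ)) =ᵐ[μ]
      fun ω => ∑ n ∈ range N, ((fun ω i => ξ i ω) ⁻¹' ladderEpoch (n + 1)).indicator 1 ω := by
    filter_upwards [hbound] with ω hω
    rw [partialSups_partialSum_eq_count_ladderEpoch hω]
    push_cast
    rfl
  rw [integral_congr_ae hcount, integral_finsetSum _ fun n _ =>
    (integrable_const 1).indicator (hladder (n + 1))]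
  refine sum_congr rfl fun n _ => ?_
  rw [integral_indicator_one (hladder (n + 1)), measureReal_def, measureReal_def,
    measure_ladderEpoch_eq hmeas hindep hident]

lemma tendsto_integral_partialSups_partialSum_div [IsProbabilityMeasure μ]
    (hmeas : ∀ i, Measurable (ξ i)) (hindep : iIndepFun ξ μ)
    (hident : ∀ i, IdentDistrib (ξ i) (ξ 0) μ μ) (hbound : ∀ᵐ ω ∂μ, ∀ i, ξ i ω ≤ 1)
    (hint : Integrable (fun ω => (ξ 0 ω : ℝ)) μ)
    (hmean : 0 ≤ ∫ ω, (ξ 0 ω : ℝ) ∂μ) :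
    Tendsto (fun N : ℕ => ∫ ω, (partialSups (partialSum fun i => ξ i ω) N : ℝ) / N ∂μ) atTop
      (𝓝 (∫ ω, (ξ 0 ω : ℝ) ∂μ)) := by
  have hslln := strong_law_ae_real (fun i ω => (ξ i ω : ℝ)) hint
    (fun i j hij =>
      (hindep.indepFun hij).comp (measurable_of_countable _) (measurable_of_countable _))
    (fun i => (hident i).comp (measurable_of_countable _))
  have hcast ω N : (partialSups (partialSum fun i => ξ i ω) N : ℝ)
      = partialSups (fun n => (partialSum (fun i => ξ i ω) n : ℝ)) N :=
    (map_partialSups (⟨Int.cast, Int.cast_mono⟩ : ℤ →o ℝ) _ N).symm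
  have hF N : Measurable fun ω => (partialSups (partialSum fun i => ξ i ω) N : ℝ) :=
    (measurable_of_countable _).comp
      ((measurable_partialSups_partialSum N).comp (measurable_pi_lambda _ hmeas))
  have hdom N : ∀ᵐ ω ∂μ, ‖(partialSups (partialSum fun i => ξ i ω) N : ℝ) / N‖ ≤ 1 := by
    filter_upwards [hbound] with ω hω
    rw [norm_div, Real.norm_natCast, Real.norm_of_nonneg (by
      exact_mod_cast partialSups_partialSum_nonneg _ N)]
    exact div_le_one_of_le₀ (by exact_mod_cast partialSups_partialSum_le hω N) N.cast_nonneg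
  have hlim : ∀ᵐ ω ∂μ,
      Tendsto (fun N : ℕ => (partialSups (partialSum fun i => ξ i ω) N : ℝ) / N) atTop
        (𝓝 (∫ ω, (ξ 0 ω : ℝ) ∂μ)) := by
    filter_upwards [hslln] with ω hω
    simp only [hcast]
    exact tendsto_partialSups_div_of_tendsto_div hmean (by simpa [partialSum] using hω)
  simpa using tendsto_integral_of_dominated_convergence (f := fun _ => ∫ ω, (ξ 0 ω : ℝ) ∂μ)
    (fun _ => 1) (fun N => ((hF N).div_const _).aestronglyMeasurable) (integrable_const 1)
    hdom hlim

lemma measureReal_positiveForever [IsProbabilityMeasure μ] (hmeas : ∀ i, Measurable (ξ i))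
    (hindep : iIndepFun ξ μ) (hident : ∀ i, IdentDistrib (ξ i) (ξ 0) μ μ)
    (hbound : ∀ᵐ ω ∂μ, ∀ i, ξ i ω ≤ 1) (hint : Integrable (fun ω => (ξ 0 ω : ℝ)) μ)
    (hmean : 0 ≤ ∫ ω, (ξ 0 ω : ℝ) ∂μ) :
    μ.real ((fun ω i => ξ i ω) ⁻¹' positiveForever) = ∫ ω, (ξ 0 ω : ℝ) ∂μ := by
  have hdecr : Tendsto (fun n => μ.real ((fun ω i => ξ i ω) ⁻¹' positiveUpTo (n + 1))) atTop
      (𝓝 (μ.real ((fun ω i => ξ i ω) ⁻¹' positiveForever))) := by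
    have := tendsto_measure_iInter_atTop (μ := μ)
      (fun n => (measurableSet_preimage (measurable_pi_lambda _ hmeas)
        (measurableSet_positiveUpTo (n + 1))).nullMeasurableSet)
      (fun m n hmn => Set.preimage_mono (positiveUpTo_antitone (by omega)))
      ⟨0, measure_ne_top _ _⟩
    rw [← Set.preimage_iInter, iInter_positiveUpTo_succ] at this
    exact (ENNReal.tendsto_toReal (measure_ne_top _ _)).comp this
  refine tendsto_nhds_unique hdecr.cesaro ?_
  convert tendsto_integral_partialSups_partialSum_div hmeas hindep hident hbound hint hmean
    using 2 with N
  rw [integral_div, integral_partialSups_partialSum hmeas hindep hident hbound, inv_mul_eq_div]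

lemma measure_positiveForever (hmeas : ∀ i, Measurable (ξ i)) (hindep : iIndepFun ξ μ)
    (hident : ∀ i, IdentDistrib (ξ i) (ξ 0) μ μ) (hbound : ∀ᵐ ω ∂μ, ξ 0 ω ≤ 1) :
    μ ((fun ω i => ξ i ω) ⁻¹' positiveForever)
      = μ {ω | ξ 0 ω = 1} * μ ((fun ω i => ξ i ω) ⁻¹' nonnegForever) := by
  have hshift := hindep.identDistrib_precomp hmeas Nat.succ_injective
    fun i => (hident _).trans (hident i).symm
  calc μ ((fun ω i => ξ i ω) ⁻¹' positiveForever)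
      = μ (ξ 0 ⁻¹' {1} ∩ (fun ω i => ξ (i + 1) ω) ⁻¹' nonnegForever) := by
        refine measure_congr ?_
        filter_upwards [hbound] with ω hω
        exact propext (mem_positiveForever_iff hω)
    _ = μ {ω | ξ 0 ω = 1} * μ ((fun ω i => ξ i ω) ⁻¹' nonnegForever) := by
        rw [(hindep.indepFun_zero_succ hmeas).measure_inter_preimage_eq_mul _ _
          (measurableSet_singleton 1) measurableSet_nonnegForever,
          hshift.measure_mem_eq measurableSet_nonnegForever]
        rfl

end SkipFreeWalk

/-- For an i.i.d. integer-valued random walk which is skip-free to the right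
(increments `≤ 1` a.s.) with positive mean increment, the probability that the
walk stays nonnegative forever is `E[ξ₁] / P(ξ₁ = 1)`. -/
theorem skip_free_walk_stays_nonneg
    {Ω : Type*} [MeasurableSpace Ω] (μ : Measure Ω) [IsProbabilityMeasure μ]
    (ξ : ℕ → Ω → ℤ) (hmeas : ∀ i, Measurable (ξ i))
    (hindep : iIndepFun ξ μ)
    (hident : ∀ i, IdentDistrib (ξ i) (ξ 0) μ μ)
    (hbound : ∀ i, ∀ᵐ ω ∂μ, ξ i ω ≤ 1)
    (hint : Integrable (fun ω => ((ξ 0 ω : ℝ))) μ)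
    (hpos : 0 < ∫ ω, (ξ 0 ω : ℝ) ∂μ) :
    μ {ω | ∀ n, 1 ≤ n → 0 ≤ ∑ k ∈ Finset.range n, ξ k ω}
      = ENNReal.ofReal ((∫ ω, (ξ 0 ω : ℝ) ∂μ) / (μ {ω | ξ 0 ω = 1}).toReal) := by
  show μ ((fun ω i => ξ i ω) ⁻¹' SkipFreeWalk.nonnegForever) = _
  have hprod := SkipFreeWalk.measureReal_positiveForever hmeas hindep hident
    (ae_all_iff.2 hbound) hint hpos.le
  rw [measureReal_def, SkipFreeWalk.measure_positiveForever hmeas hindep hident (hbound 0),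
    ENNReal.toReal_mul] at hprod
  have hone : (μ {ω | ξ 0 ω = 1}).toReal ≠ 0 := by
    intro h
    rw [h, zero_mul] at hprod
    exact hpos.ne hprod
  rw [← hprod, mul_div_cancel_left₀ _ hone, ENNReal.ofReal_toReal (measure_ne_top _ _)]
end

section
/- Fix α ∈ (0, 1/2] and p ≥ 1 − α. Define g(s) = αs − α + (1 − s^{−1})p for s ∈ (0,1). Then g(s) < log s for all s ∈ (0,1). -/
/-!
Since `sinh x < x` for `x < 0`, taking `x = log s` gives `(s - s⁻¹) / 2 < log s` on `(0, 1)`.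
As `1 - s⁻¹ < 0` there, the left-hand side of the claim only grows when `p` is lowered to `1 - α`,
and `α (s - 1) + (1 - α) (1 - s⁻¹)` falls short of `(s - s⁻¹) / 2` by `(1/2 - α) (s + s⁻¹ - 2) ≥ 0`.
-/

open Real

lemma half_sub_inv_lt_log {s : ℝ} (hs₀ : 0 < s) (hs₁ : s < 1) : (s - s⁻¹) / 2 < log s := by
  rw [← sinh_log hs₀, sinh_lt_self_iff]
  exact log_neg hs₀ hs₁

lemma mul_sub_one_add_mul_one_sub_inv_le {α s : ℝ} (hα : α ≤ 1 / 2) (hs : 0 < s) :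
    α * (s - 1) + (1 - α) * (1 - s⁻¹) ≤ (s - s⁻¹) / 2 := by
  have hamgm : 0 ≤ s + s⁻¹ - 2 := by
    have : s + s⁻¹ - 2 = (s - 1) ^ 2 / s := by field_simp; ring
    rw [this]
    positivity
  linarith [mul_nonneg (sub_nonneg.2 hα) hamgm]

/-- For `α ∈ (0,1/2]` and `p ≥ 1-α`, the function `g(s) = αs - α + (1-s⁻¹)p`
satisfies `g(s) < log s` for all `s ∈ (0,1)`. -/
theorem g_lt_log (α p : ℝ) (hα : α ∈ Set.Ioc (0 : ℝ) (1 / 2)) (hp : 1 - α ≤ p) :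
    ∀ s ∈ Set.Ioo (0 : ℝ) 1, α * s - α + (1 - s⁻¹) * p < Real.log s := by
  rintro s ⟨hs₀, hs₁⟩
  have hinv : 1 - s⁻¹ < 0 := by linarith [(one_lt_inv₀ hs₀).mpr hs₁]
  have hp' : (1 - s⁻¹) * p ≤ (1 - α) * (1 - s⁻¹) := by
    rw [mul_comm (1 - α)]
    exact mul_le_mul_of_nonpos_left hp hinv.le
  linarith [mul_sub_one_add_mul_one_sub_inv_le hα.2 hs₀, half_sub_inv_lt_log hs₀ hs₁]
end

section
/- Let G be the probability generating function of a nonnegative integer random variable X with E[X] < ∞ satisfying the functional equation G(s) = exp(s^{−1}G(s) + αs − α − 1 + (1 − s^{−1})(1−α)) on (0,1], where α ∈ (0,1/2]. If m = lim_{s↑1} G'(s) exists in [0,∞), then m² − 2m + 2α = 0, so m ∈ {1 − √(1−2α), 1 + √(1−2α)}. -/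
open MeasureTheory Filter Set Topology

/-!
Differentiating the functional equation gives, on `(0,1)`,
`s G'(s) (s - G(s)) = G(s) (α s² + 1 - α - G(s))`.
Both `N(s) = α s² + 1 - α - G(s)` and `D(s) = s - G(s)` vanish at `s = 1`, so `G'(s)` is
`G(s)/s` times a `0/0` quotient. Cauchy's mean value theorem on `[s, 1]` replaces `N(s)/D(s)` by
`N'(c)/D'(c) = (2αc - G'(c))/(1 - G'(c))` with `s < c < 1`; letting `s ↑ 1` gives
`2α - m = m (1 - m)`.
-/

section GeneratingFunction

variable {Ω : Type*} [MeasurableSpace Ω] {μ : Measure Ω} [IsFiniteMeasure μ] {X : Ω → ℕ}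

theorem continuousOn_integral_pow (hX : Measurable X) :
    ContinuousOn (fun t : ℝ => ∫ ω, t ^ X ω ∂μ) (Icc (-1) 1) :=
  continuousOn_of_dominated (bound := fun _ => 1)
    (fun _ _ => (Measurable.of_discrete.comp hX).aestronglyMeasurable)
    (fun t ht => ae_of_all _ fun ω => by
      simpa using pow_le_one₀ (abs_nonneg t) (abs_le.2 ht))
    (integrable_const 1) (ae_of_all _ fun _ => (continuous_pow _).continuousOn)

theorem hasDerivAt_integral_pow (hX : Measurable X)
    (hint : Integrable (fun ω => (X ω : ℝ)) μ) {s : ℝ} (hs : |s| < 1) :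
    HasDerivAt (fun t : ℝ => ∫ ω, t ^ X ω ∂μ) (∫ ω, X ω * s ^ (X ω - 1) ∂μ) s := by
  have hball : ∀ x ∈ Metric.ball s (1 - |s|), |x| ≤ 1 := fun x hx => by
    rw [Metric.mem_ball, Real.dist_eq] at hx
    linarith [abs_sub_abs_le_abs_sub x s]
  have hmeas (f : ℕ → ℝ) : AEStronglyMeasurable (fun ω => f (X ω)) μ :=
    (Measurable.of_discrete.comp hX).aestronglyMeasurable
  refine (hasDerivAt_integral_of_dominated_loc_of_deriv_le (bound := fun ω => (X ω : ℝ))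
    (F' := fun x ω => X ω * x ^ (X ω - 1))
    (Metric.ball_mem_nhds s (sub_pos.2 hs)) (.of_forall fun x => hmeas (x ^ ·))
    ?_ (hmeas fun n => n * s ^ (n - 1)) ?_ hint ?_).2
  · refine (integrable_const (1 : ℝ)).mono (hmeas (s ^ ·)) (ae_of_all _ fun ω => ?_)
    simpa using pow_le_one₀ (abs_nonneg s) hs.le
  · refine ae_of_all _ fun ω x hx => ?_
    simpa using mul_le_of_le_one_right (Nat.cast_nonneg (X ω))
      (pow_le_one₀ (abs_nonneg x) (hball x hx))
  · exact ae_of_all _ fun ω x _ => hasDerivAt_pow (X ω) x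

end GeneratingFunction

theorem tendsto_nhdsLT_of_eventually_mem_Ioo {β : Type*} [LinearOrder β] [TopologicalSpace β]
    [OrderTopology β] {c : β → β} {a : β} (h : ∀ᶠ s in 𝓝[<] a, c s ∈ Ioo s a) :
    Tendsto c (𝓝[<] a) (𝓝[<] a) :=
  tendsto_nhdsWithin_iff.2
    ⟨tendsto_of_tendsto_of_tendsto_of_le_of_le' (tendsto_nhdsWithin_of_tendsto_nhds tendsto_id)
      tendsto_const_nhds (h.mono fun _ hs => hs.1.le) (h.mono fun _ hs => hs.2.le),
    h.mono fun _ hs => hs.2⟩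

section FunctionalEquation

variable {G : ℝ → ℝ} {α : ℝ}

theorem mul_deriv_mul_sub_eq_of_eventuallyEq_exp {G' s : ℝ} (hs : s ≠ 0)
    (hd : HasDerivAt G G' s)
    (hfe : ∀ᶠ t in 𝓝 s, G t = Real.exp (t⁻¹ * G t + α * t - α - 1 + (1 - t⁻¹) * (1 - α))) :
    s * G' * (s - G s) = G s * (α * s ^ 2 + 1 - α - G s) := by
  have hexponent : HasDerivAt (fun t => t⁻¹ * G t + α * t - α - 1 + (1 - t⁻¹) * (1 - α))
      (-(s ^ 2)⁻¹ * G s + s⁻¹ * G' + α + (s ^ 2)⁻¹ * (1 - α)) s :=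
    (((((hasDerivAt_inv hs).mul hd).add ((hasDerivAt_id s).const_mul α)).sub_const α).sub_const 1
      |>.add (((hasDerivAt_inv hs).const_sub 1).mul_const (1 - α))).congr_deriv (by ring)
  have h := hd.unique (hexponent.exp.congr_of_eventuallyEq hfe)
  rw [← hfe.self_of_nhds] at h
  field_simp at h
  linear_combination h

theorem exists_mem_Ioo_mul_sub_deriv_eq {G' s : ℝ} (hs : s < 1)
    (hcont : ContinuousOn G (Icc s 1)) (hdiff : ∀ x ∈ Ioo s 1, HasDerivAt G (deriv G x) x)
    (hG1 : G 1 = 1) (hne : G s ≠ s)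
    (hode : s * G' * (s - G s) = G s * (α * s ^ 2 + 1 - α - G s)) :
    ∃ c ∈ Ioo s 1, G s * (2 * α * c - deriv G c) = s * G' * (1 - deriv G c) := by
  obtain ⟨c, hc, hslope⟩ := exists_ratio_hasDerivAt_eq_ratio_slope
    (fun t => α * t ^ 2 + 1 - α - G t) (fun t => 2 * α * t - deriv G t) hs
    (by fun_prop)
    (fun x hx => ((((hasDerivAt_pow 2 x).const_mul α).add_const 1).sub_const α).sub (hdiff x hx)
      |>.congr_deriv (by ring))
    (fun t => t - G t) (fun t => 1 - deriv G t) (by fun_prop)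
    (fun x hx => (hasDerivAt_id x).sub (hdiff x hx))
  refine ⟨c, hc, mul_left_cancel₀ (sub_ne_zero.2 hne) ?_⟩
  simp only [hG1] at hslope
  linear_combination G s * hslope + (1 - deriv G c) * hode

theorem sq_sub_two_mul_add_eq_zero_of_tendsto_deriv {m : ℝ} (hα : α ≤ 1 / 2)
    (hcont : ContinuousOn G (Icc 0 1)) (hdiff : ∀ s ∈ Ioo (0 : ℝ) 1, DifferentiableAt ℝ G s)
    (hG1 : G 1 = 1)
    (hfe : ∀ s ∈ Ioo (0 : ℝ) 1,
      G s = Real.exp (s⁻¹ * G s + α * s - α - 1 + (1 - s⁻¹) * (1 - α)))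
    (hm : Tendsto (deriv G) (𝓝[<] 1) (𝓝 m)) :
    m ^ 2 - 2 * m + 2 * α = 0 := by
  have hode (s : ℝ) (hs : s ∈ Ioo (0 : ℝ) 1) :
      s * deriv G s * (s - G s) = G s * (α * s ^ 2 + 1 - α - G s) :=
    mul_deriv_mul_sub_eq_of_eventuallyEq_exp hs.1.ne' (hdiff s hs).hasDerivAt
      (eventually_of_mem (Ioo_mem_nhds hs.1 hs.2) hfe)
  have hne (s : ℝ) (hs : s ∈ Ioo (0 : ℝ) 1) : G s ≠ s := fun h => by
    -- `α s² + 1 - α - s = (1 - s) (1 - α (1 + s))` and `α (1 + s) ≤ (1 + s) / 2 < 1`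
    have hpos : 0 < α * s ^ 2 + 1 - α - s := by
      nlinarith [hs.1, hs.2, mul_nonneg (sub_nonneg.2 hα) (sub_nonneg.2 hs.2.le)]
    have h0 := hode s hs
    rw [h, sub_self, mul_zero] at h0
    nlinarith [mul_pos hs.1 hpos]
  choose! c hc hceq using fun s (hs : s ∈ Ioo (0 : ℝ) 1) =>
    exists_mem_Ioo_mul_sub_deriv_eq hs.2 (hcont.mono (Icc_subset_Icc hs.1.le le_rfl))
      (fun x hx => (hdiff x ⟨hs.1.trans hx.1, hx.2⟩).hasDerivAt) hG1 (hne s hs) (hode s hs)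
  have hIoo : Ioo (0 : ℝ) 1 ∈ 𝓝[<] 1 := Ioo_mem_nhdsLT one_pos
  have hs : Tendsto (fun s : ℝ => s) (𝓝[<] 1) (𝓝 1) :=
    tendsto_nhdsWithin_of_tendsto_nhds tendsto_id
  have hc1 : Tendsto c (𝓝[<] 1) (𝓝[<] 1) :=
    tendsto_nhdsLT_of_eventually_mem_Ioo (eventually_of_mem hIoo hc)
  have hG : Tendsto G (𝓝[<] 1) (𝓝 1) := by
    simpa only [hG1] using ((hcont 1 ⟨zero_le_one, le_rfl⟩).mono_of_mem_nhdsWithin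
      (mem_of_superset hIoo Ioo_subset_Icc_self)).tendsto
  have hlim := tendsto_nhds_unique_of_eventuallyEq
    (hG.mul ((tendsto_const_nhds.mul (tendsto_nhds_of_tendsto_nhdsWithin hc1)).sub
      (hm.comp hc1)))
    ((hs.mul hm).mul (tendsto_const_nhds.sub (hm.comp hc1)))
    (eventually_of_mem hIoo hceq)
  linear_combination hlim

end FunctionalEquation

theorem eq_one_sub_sqrt_or_eq_one_add_sqrt {α m : ℝ} (h : m ^ 2 - 2 * m + 2 * α = 0) :
    m = 1 - √(1 - 2 * α) ∨ m = 1 + √(1 - 2 * α) := by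
  rw [show 1 - 2 * α = (m - 1) ^ 2 by linear_combination -h, Real.sqrt_sq_eq_abs]
  rcases le_total m 1 with hm | hm
  · left; rw [abs_of_nonpos (sub_nonpos.2 hm)]; ring
  · right; rw [abs_of_nonneg (sub_nonneg.2 hm)]; ring

theorem pgf_derivative_limit_quadratic_general
    {Ω : Type*} [MeasurableSpace Ω] (μ : Measure Ω) [IsProbabilityMeasure μ]
    (X : Ω → ℕ) (hXm : Measurable X)
    (hint : Integrable (fun ω => (X ω : ℝ)) μ)
    (α : ℝ) (hα : α ∈ Set.Ioc (0 : ℝ) (1 / 2))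
    (G : ℝ → ℝ) (hG : ∀ s : ℝ, G s = ∫ ω, s ^ (X ω) ∂μ)
    (hfe : ∀ s ∈ Set.Ioc (0 : ℝ) 1,
      G s = Real.exp (s⁻¹ * G s + α * s - α - 1 + (1 - s⁻¹) * (1 - α)))
    (m : ℝ)
    (hm : Filter.Tendsto (deriv G) (nhdsWithin 1 (Set.Iio 1)) (nhds m)) :
    m ^ 2 - 2 * m + 2 * α = 0
      ∧ (m = 1 - Real.sqrt (1 - 2 * α) ∨ m = 1 + Real.sqrt (1 - 2 * α)) := by
  have hGeq : G = fun t => ∫ ω, t ^ X ω ∂μ := funext hG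
  have hcont : ContinuousOn G (Icc 0 1) :=
    hGeq ▸ (continuousOn_integral_pow hXm).mono (Icc_subset_Icc (by norm_num) le_rfl)
  have hdiff (s : ℝ) (hs : s ∈ Ioo (0 : ℝ) 1) : DifferentiableAt ℝ G s :=
    hGeq ▸ (hasDerivAt_integral_pow hXm hint
      (abs_lt.2 ⟨by linarith [hs.1], hs.2⟩)).differentiableAt
  have hq := sq_sub_two_mul_add_eq_zero_of_tendsto_deriv hα.2 hcont hdiff (by simp [hG])
    (fun s hs => hfe s (Ioo_subset_Ioc_self hs)) hm
  exact ⟨hq, eq_one_sub_sqrt_or_eq_one_add_sqrt hq⟩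

/-- Let `G` be the probability generating function of a nonnegative integer
random variable `X` with finite mean, satisfying the functional equation
`G(s) = exp(s⁻¹G(s) + αs - α - 1 + (1-s⁻¹)(1-α))` on `(0,1]`, with `α ∈ (0,1/2]`.
If `m = lim_{s↑1} G'(s)` exists in `[0,∞)`, then `m² - 2m + 2α = 0`, so
`m ∈ {1 - √(1-2α), 1 + √(1-2α)}`. -/
theorem pgf_derivative_limit_quadratic
    {Ω : Type*} [MeasurableSpace Ω] (μ : Measure Ω) [IsProbabilityMeasure μ]
    (X : Ω → ℕ) (hXm : Measurable X)
    (hint : Integrable (fun ω => (X ω : ℝ)) μ)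
    (α : ℝ) (hα : α ∈ Set.Ioc (0 : ℝ) (1 / 2))
    (G : ℝ → ℝ) (hG : ∀ s : ℝ, G s = ∫ ω, s ^ (X ω) ∂μ)
    (hfe : ∀ s ∈ Set.Ioc (0 : ℝ) 1,
      G s = Real.exp (s⁻¹ * G s + α * s - α - 1 + (1 - s⁻¹) * (1 - α)))
    (m : ℝ) (hm0 : 0 ≤ m)
    (hm : Filter.Tendsto (deriv G) (nhdsWithin 1 (Set.Iio 1)) (nhds m)) :
    m ^ 2 - 2 * m + 2 * α = 0
      ∧ (m = 1 - Real.sqrt (1 - 2 * α) ∨ m = 1 + Real.sqrt (1 - 2 * α)) :=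
  pgf_derivative_limit_quadratic_general μ X hXm hint α hα G hG hfe m hm
end

section
/- Let X_1, X_2, ... be i.i.d. nonnegative integer random variables with E[X_1] = 1 − √(1−2α) and P(X_1 = 0) = 1 − α for some α ∈ (0,1/2). Let C_n = n − Σ_{k=1}^n X_k. Then P(C_n ≥ 0 for all n ≥ 1) = √(1−2α)/(1−α). -/
/-!
Call `n` a ladder point of the walk `C` if `C m > C n` for every `m > n`. By the strong law,
`C n / n → 1 - E[X₁] = √(1-2α) > 0` almost surely. Since the increments of `C` are at most `1`,
the minimum of `C` over `[N, ∞)` goes up by exactly one at each ladder point and stays put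
elsewhere, so the ladder points have asymptotic density `√(1-2α)`. Whether `n` is a ladder point
depends only on `X_{n+1}, X_{n+2}, …`, so every `n` is one with the same probability, and
averaging gives `√(1-2α)` for that probability. Finally, `0` is a ladder point iff `X₁ = 0` and the
walk driven by `X₂, X₃, …` stays nonnegative, so by independence this probability is
`(1-α) · P(Cₙ ≥ 0 ∀ n)`.
-/

open MeasureTheory ProbabilityTheory Filter Set Topology Finset
open scoped Classical

def IsLadderPoint (u : ℕ → ℤ) (n : ℕ) : Prop := ∀ m, n < m → u n < u m

noncomputable def futureMin (u : ℕ → ℤ) (N : ℕ) : ℤ := sInf (u '' Ici N)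

section futureMin

variable {u : ℕ → ℤ} (htop : Tendsto u atTop atTop)
include htop

lemma bddBelow_image_Ici_of_tendsto_atTop (N : ℕ) : BddBelow (u '' Ici N) :=
  (bddBelow_range_of_tendsto_atTop_atTop htop).mono (image_subset_range _ _)

lemma futureMin_mem (N : ℕ) : futureMin u N ∈ u '' Ici N :=
  Int.csInf_mem (nonempty_Ici.image u) (bddBelow_image_Ici_of_tendsto_atTop htop N)

lemma futureMin_le {N n : ℕ} (h : N ≤ n) : futureMin u N ≤ u n :=
  csInf_le (bddBelow_image_Ici_of_tendsto_atTop htop N) ⟨n, h, rfl⟩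

lemma futureMin_eq_min (N : ℕ) : futureMin u N = min (u N) (futureMin u (N + 1)) := by
  have hIci : Ici N = insert N (Ici (N + 1)) := by ext; simp; omega
  rw [futureMin, hIci, image_insert_eq,
    csInf_insert (bddBelow_image_Ici_of_tendsto_atTop htop _) (nonempty_Ici.image u)]
  rfl

lemma futureMin_succ (h1 : ∀ n, u (n + 1) ≤ u n + 1) (N : ℕ) :
    futureMin u (N + 1) = futureMin u N + if IsLadderPoint u N then 1 else 0 := by
  rw [futureMin_eq_min htop N]
  split_ifs with hN
  · obtain ⟨m, hm, hmin⟩ := futureMin_mem htop (N + 1)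
    have : futureMin u (N + 1) = u N + 1 :=
      le_antisymm ((futureMin_le htop le_rfl).trans (h1 N)) (hmin ▸ hN m hm)
    omega
  · obtain ⟨m, hm, hle⟩ : ∃ m, N < m ∧ u m ≤ u N := by simpa [IsLadderPoint] using hN
    have := futureMin_le htop (show N + 1 ≤ m by omega)
    omega

lemma card_ladderPoints (h1 : ∀ n, u (n + 1) ≤ u n + 1) (N : ℕ) :
    (#{n ∈ range N | IsLadderPoint u n} : ℤ) = futureMin u N - futureMin u 0 := by
  induction N with
  | zero => simp
  | succ N ih =>
    rw [natCast_card_filter, sum_range_succ, ← natCast_card_filter, ih, futureMin_succ htop h1]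
    ring

end futureMin

lemma eventually_mul_lt_of_tendsto_div {v : ℕ → ℝ} {L c : ℝ}
    (hL : Tendsto (fun n => v n / n) atTop (𝓝 L)) (hc : c < L) :
    ∀ᶠ n : ℕ in atTop, n * c < v n := by
  filter_upwards [hL.eventually (lt_mem_nhds hc), eventually_gt_atTop 0] with n hn hn0
  rwa [lt_div_iff₀ (by exact_mod_cast hn0), mul_comm] at hn

lemma tendsto_atTop_of_tendsto_div {v : ℕ → ℝ} {L : ℝ} (hL0 : 0 < L)
    (hL : Tendsto (fun n => v n / n) atTop (𝓝 L)) : Tendsto v atTop atTop :=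
  tendsto_atTop_mono' _ ((eventually_mul_lt_of_tendsto_div hL (half_lt_self hL0)).mono
    fun _ h => h.le) (tendsto_natCast_atTop_atTop.atTop_mul_const (half_pos hL0))

section ladder

variable {u : ℕ → ℤ} {L : ℝ} (hL0 : 0 < L) (hL : Tendsto (fun n => (u n : ℝ) / n) atTop (𝓝 L))
include hL0 hL

lemma tendsto_futureMin_div (htop : Tendsto u atTop atTop) :
    Tendsto (fun N => (futureMin u N : ℝ) / N) atTop (𝓝 L) := by
  refine tendsto_order.2 ⟨fun a ha => ?_, fun b hb => ?_⟩
  · obtain ⟨c, hac, hcL⟩ := exists_between (max_lt ha hL0)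
    obtain ⟨N₀, hN₀⟩ := eventually_atTop.1 (eventually_mul_lt_of_tendsto_div hL hcL)
    filter_upwards [eventually_ge_atTop N₀, eventually_gt_atTop 0] with N hN hN0
    obtain ⟨n, hn, hmin⟩ := futureMin_mem htop N
    have hNn : (N : ℝ) ≤ n := by exact_mod_cast mem_Ici.1 hn
    rw [lt_div_iff₀ (by exact_mod_cast hN0), ← hmin]
    calc a * N ≤ c * N := by gcongr; exact (le_max_left a 0).trans hac.le
      _ ≤ n * c := by rw [mul_comm]; gcongr; exact (le_max_right a 0).trans hac.le
      _ < u n := hN₀ n (hN.trans (mem_Ici.1 hn))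
  · filter_upwards [hL.eventually (gt_mem_nhds hb)] with N hN
    exact lt_of_le_of_lt (by gcongr; exact_mod_cast futureMin_le htop le_rfl) hN

theorem tendsto_card_ladderPoints_div (h1 : ∀ n, u (n + 1) ≤ u n + 1) :
    Tendsto (fun N => (#{n ∈ range N | IsLadderPoint u n} : ℝ) / N) atTop (𝓝 L) := by
  have htop : Tendsto u atTop atTop :=
    tendsto_intCast_atTop_iff.1 (tendsto_atTop_of_tendsto_div hL0 hL)
  have := (tendsto_futureMin_div hL0 hL htop).sub
    (tendsto_const_div_atTop_nhds_zero_nat (futureMin u 0 : ℝ))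
  rw [sub_zero] at this
  refine this.congr fun N => ?_
  rw [← sub_div, ← Int.cast_sub, ← card_ladderPoints htop h1, Int.cast_natCast]

end ladder

/-- The paper's `Cₙ`, for `X_{k+1} = x k`. -/
def walk (x : ℕ → ℕ) (n : ℕ) : ℤ := n - ∑ k ∈ range n, (x k : ℤ)

def walkStaysPos : Set (ℕ → ℕ) := {x | ∀ n, 0 < walk x (n + 1)}

def walkStaysNonneg : Set (ℕ → ℕ) := {x | ∀ n, 0 ≤ walk x n}

section walk

variable (x : ℕ → ℕ)

lemma walk_nonneg_iff (n : ℕ) : 0 ≤ walk x n ↔ ∑ k ∈ range n, x k ≤ n := by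
  rw [walk, sub_nonneg]
  exact_mod_cast Iff.rfl

lemma walk_succ_le (n : ℕ) : walk x (n + 1) ≤ walk x n + 1 := by
  simp only [walk, sum_range_succ, Nat.cast_succ]
  omega

lemma walk_add (m n : ℕ) : walk x (m + n) = walk x m + walk (fun i => x (m + i)) n := by
  simp only [walk, sum_range_add, Nat.cast_add]
  ring

lemma isLadderPoint_walk_iff (n : ℕ) :
    IsLadderPoint (walk x) n ↔ (fun i => x (n + i)) ∈ walkStaysPos := by
  refine ⟨fun h j => ?_, fun h m hm => ?_⟩
  · have := h (n + (j + 1)) (by omega)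
    rw [walk_add] at this
    linarith
  · obtain ⟨j, rfl⟩ := Nat.exists_eq_add_of_lt hm
    have := h j
    rw [add_assoc, walk_add]
    linarith

lemma mem_walkStaysPos_iff :
    x ∈ walkStaysPos ↔ x 0 = 0 ∧ (fun i => x (1 + i)) ∈ walkStaysNonneg := by
  have hsplit : ∀ n, walk x (n + 1) = 1 - x 0 + walk (fun i => x (1 + i)) n := fun n => by
    rw [add_comm, walk_add]
    simp [walk]
  simp only [walkStaysPos, walkStaysNonneg, mem_ofPred_eq, hsplit]
  refine ⟨fun h => ⟨?_, fun n => ?_⟩, fun ⟨h0, h⟩ n => ?_⟩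
  · have := h 0
    simp only [walk, range_zero, sum_empty, Nat.cast_zero, sub_zero] at this
    omega
  · have := h n
    omega
  · have := h n
    omega

lemma measurable_walk (n : ℕ) : Measurable fun x : ℕ → ℕ => walk x n := by
  unfold walk
  fun_prop

lemma measurableSet_walkStaysPos : MeasurableSet walkStaysPos := by
  simp only [walkStaysPos, ofPred_forall]
  exact .iInter fun n => measurableSet_lt measurable_const (measurable_walk _)

lemma measurableSet_walkStaysNonneg : MeasurableSet walkStaysNonneg := by
  simp only [walkStaysNonneg, ofPred_forall]
  exact .iInter fun n => measurableSet_le measurable_const (measurable_walk _)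

end walk

namespace ProbabilityTheory

variable {Ω ι β : Type*} [MeasurableSpace Ω] [MeasurableSpace β] {μ : Measure Ω}
  {X : ι → Ω → β}

lemma iIndepFun.indepFun_pi_of_notMem_range {κ : Type*} (hX : ∀ i, Measurable (X i))
    (h : iIndepFun X μ) {i : ι} {g : κ → ι} (hi : i ∉ range g) :
    IndepFun (X i) (fun ω k => X (g k) ω) μ := by
  have hindep := indep_iSup_of_disjoint (fun j => (hX j).comap_le)
    ((iIndepFun_iff_iIndep _ X μ).1 h) (Set.disjoint_singleton_left.2 hi)
  refine indep_of_indep_of_le_right (indep_of_indep_of_le_left hindep ?_) ?_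
  · exact le_biSup (fun j => MeasurableSpace.comap (X j) _) (mem_singleton i)
  · rw [MeasurableSpace.pi, MeasurableSpace.comap_iSup]
    refine iSup_le fun k => ?_
    rw [MeasurableSpace.comap_comp]
    exact le_biSup (fun j => MeasurableSpace.comap (X j) _) (mem_range_self k)

lemma iIndepFun.identDistrib_pi_comp [Countable ι] {i₀ : ι} (h : iIndepFun X μ)
    (hident : ∀ i, IdentDistrib (X i) (X i₀) μ μ) {g : ι → ι} (hg : Function.Injective g) :
    IdentDistrib (fun ω k => X (g k) ω) (fun ω i => X i ω) μ μ :=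
  .pi (fun k => (hident (g k)).trans (hident k).symm) (h.precomp hg) h

end ProbabilityTheory

section frequency

variable {Ω : Type*} [MeasurableSpace Ω] {μ : Measure Ω} [IsProbabilityMeasure μ]

theorem eq_of_ae_tendsto_frequency {A : ℕ → Set Ω} (hA : ∀ n, MeasurableSet (A n)) {p q : ℝ}
    (hp : ∀ n, μ.real (A n) = p)
    (hq : ∀ᵐ ω ∂μ, Tendsto (fun N => (#{n ∈ range N | ω ∈ A n} : ℝ) / N) atTop (𝓝 q)) :
    p = q := by
  set F : ℕ → Ω → ℝ := fun N ω => (∑ n ∈ range N, (A n).indicator 1 ω) / N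
  have hF : ∀ N ω, F N ω = (#{n ∈ range N | ω ∈ A n} : ℝ) / N := fun N ω => by
    simp only [F, natCast_card_filter, indicator_apply, Pi.one_apply]
  have hFmeas : ∀ N, Measurable (F N) := fun N =>
    (Finset.measurable_sum _ fun n _ => measurable_one.indicator (hA n)).div_const _
  have hFint : ∀ N, 1 ≤ N → ∫ ω, F N ω ∂μ = p := fun N hN => by
    have hN' : (N : ℝ) ≠ 0 := by positivity
    have hmean : ∀ n, ∫ ω, (A n).indicator (1 : Ω → ℝ) ω ∂μ = p := fun n => by
      rw [integral_indicator_one (hA n), hp]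
    rw [integral_div, integral_finsetSum _ fun n _ => (integrable_const 1).indicator (hA n)]
    simp only [hmean, sum_const, card_range, nsmul_eq_mul]
    field_simp
  have hlim := tendsto_integral_of_dominated_convergence (fun _ => 1)
    (fun N => (hFmeas N).aestronglyMeasurable) (integrable_const 1)
    (fun N => .of_forall fun ω => by
      rw [Real.norm_of_nonneg (by rw [hF]; positivity), hF]
      exact div_le_one_of_le₀ (by exact_mod_cast (card_filter_le _ _).trans (card_range N).le)
        N.cast_nonneg)
    (hq.mono fun ω hω => by simpa only [hF] using hω)
  rw [integral_const, probReal_univ, one_smul] at hlim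
  exact tendsto_nhds_unique (tendsto_const_nhds.congr' <|
    (eventually_ge_atTop 1).mono fun N hN => (hFint N hN).symm) hlim

end frequency

section iidWalk

variable {Ω : Type*} [MeasurableSpace Ω] {μ : Measure Ω} {X : ℕ → Ω → ℕ}

lemma ae_tendsto_walk_div (hindep : iIndepFun X μ)
    (hident : ∀ i, IdentDistrib (X i) (X 0) μ μ) (hint : Integrable (fun ω => (X 0 ω : ℝ)) μ) :
    ∀ᵐ ω ∂μ, Tendsto (fun n => (walk (X · ω) n : ℝ) / n) atTop
      (𝓝 (1 - ∫ ω, (X 0 ω : ℝ) ∂μ)) := by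
  have hcast : Measurable (Nat.cast : ℕ → ℝ) := measurable_from_nat
  have hslln := strong_law_ae (μ := μ) (fun i ω => (X i ω : ℝ)) hint
    (fun i j hij => (hindep.comp (fun _ => Nat.cast) fun _ => hcast).indepFun hij)
    fun i => (hident i).comp hcast
  filter_upwards [hslln] with ω hω
  refine (tendsto_const_nhds.sub hω).congr' ((eventually_gt_atTop 0).mono fun n hn => ?_)
  have hn' : (n : ℝ) ≠ 0 := by positivity
  simp only [walk, smul_eq_mul, Int.cast_sub, Int.cast_natCast, Int.cast_sum]
  field_simp

variable (hmeas : ∀ i, Measurable (X i)) (hindep : iIndepFun X μ)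
  (hident : ∀ i, IdentDistrib (X i) (X 0) μ μ)
include hmeas hindep hident

theorem measure_walkStaysPos_eq_mul :
    μ ((fun ω i => X i ω) ⁻¹' walkStaysPos)
      = μ {ω | X 0 ω = 0} * μ ((fun ω i => X i ω) ⁻¹' walkStaysNonneg) := by
  have hsplit : (fun ω i => X i ω) ⁻¹' walkStaysPos
      = X 0 ⁻¹' {0} ∩ (fun ω i => X (1 + i) ω) ⁻¹' walkStaysNonneg := by
    ext ω
    exact mem_walkStaysPos_iff _
  have hindep0 : IndepFun (X 0) (fun ω i => X (1 + i) ω) μ :=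
    hindep.indepFun_pi_of_notMem_range hmeas (g := (1 + ·)) (by simp)
  rw [hsplit, hindep0.measure_inter_preimage_eq_mul _ _ (measurableSet_singleton 0)
      measurableSet_walkStaysNonneg,
    (hindep.identDistrib_pi_comp hident (add_right_injective 1)).measure_mem_eq
      measurableSet_walkStaysNonneg]
  rfl

theorem measureReal_walkStaysPos [IsProbabilityMeasure μ]
    (hint : Integrable (fun ω => (X 0 ω : ℝ)) μ) (hdrift : ∫ ω, (X 0 ω : ℝ) ∂μ < 1) :
    μ.real ((fun ω i => X i ω) ⁻¹' walkStaysPos) = 1 - ∫ ω, (X 0 ω : ℝ) ∂μ := by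
  refine eq_of_ae_tendsto_frequency (μ := μ)
    (A := fun n => (fun ω i => X (n + i) ω) ⁻¹' walkStaysPos)
    (fun n => measurableSet_walkStaysPos.preimage (measurable_pi_lambda _ fun i => hmeas _))
    (fun n => ?_) ?_
  · simp only [measureReal_def,
      (hindep.identDistrib_pi_comp hident (add_right_injective n)).measure_mem_eq
        measurableSet_walkStaysPos]
  · filter_upwards [ae_tendsto_walk_div hindep hident hint] with ω hω
    simpa only [Set.mem_preimage, isLadderPoint_walk_iff] using
      tendsto_card_ladderPoints_div (sub_pos.2 hdrift) hω (walk_succ_le _)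

end iidWalk

/-- Let `X₁, X₂, …` be i.i.d. nonnegative integer random variables with
`E[X₁] = 1 - √(1-2α)` and `P(X₁ = 0) = 1 - α` for some `α ∈ (0,1/2)`, and let
`Cₙ = n - Σ_{k=1}^n X_k`. Then `P(Cₙ ≥ 0 for all n ≥ 1) = √(1-2α)/(1-α)`. -/
theorem walk_stays_nonneg_prob
    {Ω : Type*} [MeasurableSpace Ω] (μ : Measure Ω) [IsProbabilityMeasure μ]
    (α : ℝ) (hα : α ∈ Set.Ioo (0 : ℝ) (1 / 2))
    (X : ℕ → Ω → ℕ) (hmeas : ∀ i, Measurable (X i))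
    (hindep : iIndepFun X μ)
    (hident : ∀ i, IdentDistrib (X i) (X 0) μ μ)
    (hint : Integrable (fun ω => (X 0 ω : ℝ)) μ)
    (hmean : ∫ ω, (X 0 ω : ℝ) ∂μ = 1 - Real.sqrt (1 - 2 * α))
    (hzero : μ {ω | X 0 ω = 0} = ENNReal.ofReal (1 - α)) :
    μ {ω | ∀ n, 1 ≤ n → ∑ k ∈ Finset.range n, X k ω ≤ n}
      = ENNReal.ofReal (Real.sqrt (1 - 2 * α) / (1 - α)) := by
  obtain ⟨-, hα2⟩ := hα
  have hdrift : 0 < Real.sqrt (1 - 2 * α) := Real.sqrt_pos.2 (by linarith)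
  have hpos := measureReal_walkStaysPos hmeas hindep hident hint (by linarith)
  rw [hmean, sub_sub_cancel] at hpos
  have htarget : {ω | ∀ n, 1 ≤ n → ∑ k ∈ Finset.range n, X k ω ≤ n}
      = (fun ω i => X i ω) ⁻¹' walkStaysNonneg := by
    ext ω
    simp only [mem_ofPred_eq, Set.mem_preimage, walkStaysNonneg, walk_nonneg_iff]
    exact ⟨fun h n => n.eq_zero_or_pos.elim (fun hn => by simp [hn]) (h n), fun h n _ => h n⟩
  have h1α : 0 < 1 - α := by linarith
  rw [htarget, ENNReal.ofReal_div_of_pos h1α, ENNReal.eq_div_iff (by simpa using h1α)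
    ENNReal.ofReal_ne_top, ← hzero, ← measure_walkStaysPos_eq_mul hmeas hindep hident, ← hpos,
    ofReal_measureReal]
end
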